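/- arXiv:1106.0965 — 4 statements merged into one kernel-verified Lean document; each statement's English description precedes it below -/
import Mathlib

section
/- Let α > 0, 0 ≤ a < x be real numbers and let f : ℝ → ℝ be continuous on [a, x]. Then the limit as ρ → 1 of the generalized fractional integral (ρI^α_{a+} f)(x) equals the Riemann–Liouville fractional integral (I^α_{a+} f)(x) = (1/Γ(α)) · ∫_a^x (x − τ)^(α−1) f(τ) dτ. -/
open MeasureTheory Real Filter

/-!
For `ρ ∈ [1/2, 3/2]` the kernel `τ ^ (ρ - 1) * (x ^ ρ - τ ^ ρ) ^ (α - 1)` is dominated, uniformly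
in `ρ`, by a multiple of `τ ^ (-1/2) * (x - τ) ^ min (α - 1) 0`, which is integrable on `(0, x)`.
For `α < 1` this rests on the lower bound `x ^ ρ - τ ^ ρ ≥ x ^ (ρ - 1) * (x - τ) / 2`, which is
Bernoulli's inequality for `(τ / x) ^ (1/2)`. As `ρ → 1` the kernel tends pointwise to
`(x - τ) ^ (α - 1)`, so dominated convergence applies; the prefactor `ρ ^ (1 - α) / Γ(α)` is
continuous at `1`.
-/

open Set

namespace Real

lemma min_rpow_le_rpow_of_mem_Icc {x p q r : ℝ} (hx : 0 < x) (hpq : p ≤ q) (hqr : q ≤ r) :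
    min (x ^ p) (x ^ r) ≤ x ^ q := by
  rcases le_total 1 x with h | h
  · exact (min_le_left _ _).trans (rpow_le_rpow_of_exponent_le h hpq)
  · exact (min_le_right _ _).trans (rpow_le_rpow_of_exponent_ge hx h hqr)

lemma rpow_le_max_rpow_of_mem_Icc {x p q r : ℝ} (hx : 0 < x) (hpq : p ≤ q) (hqr : q ≤ r) :
    x ^ q ≤ max (x ^ p) (x ^ r) := by
  rcases le_total 1 x with h | h
  · exact (rpow_le_rpow_of_exponent_le h hqr).trans (le_max_right _ _)
  · exact (rpow_le_rpow_of_exponent_ge hx h hpq).trans (le_max_left _ _)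

lemma mul_rpow_sub_one_mul_sub_le_rpow_sub_rpow {p ρ x τ : ℝ} (hp : 0 ≤ p) (hp1 : p ≤ 1)
    (hpρ : p ≤ ρ) (hx : 0 < x) (hτ : 0 ≤ τ) (hτx : τ ≤ x) :
    p * x ^ (ρ - 1) * (x - τ) ≤ x ^ ρ - τ ^ ρ := by
  set u := τ / x
  have hu : 0 ≤ u := div_nonneg hτ hx.le
  have hu1 : u ≤ 1 := div_le_one_of_le₀ hτx hx.le
  have bernoulli : u ^ ρ ≤ 1 + p * (u - 1) :=
    calc u ^ ρ ≤ u ^ p := rpow_le_rpow_of_exponent_ge' hu hu1 hp hpρ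
      _ = (1 + (u - 1)) ^ p := by ring_nf
      _ ≤ 1 + p * (u - 1) := rpow_one_add_le_one_add_mul_self (by linarith) hp hp1
  have hτρ : τ ^ ρ = u ^ ρ * x ^ ρ := by
    rw [← mul_rpow hu hx.le, div_mul_cancel₀ _ hx.ne']
  have hxρ : x ^ ρ = x ^ (ρ - 1) * x := by
    rw [← rpow_add_one hx.ne']; ring_nf
  have hxu : x * (1 - u) = x - τ := by
    simp only [u]; field_simp
  calc p * x ^ (ρ - 1) * (x - τ) = x ^ ρ * (p * (1 - u)) := by rw [hxρ, ← hxu]; ring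
    _ ≤ x ^ ρ * (1 - u ^ ρ) := by gcongr; linarith
    _ = x ^ ρ - τ ^ ρ := by rw [hτρ]; ring

end Real

lemma rpow_sub_one_le_max_one_mul_rpow_neg_half {x ρ τ : ℝ} (hρ : ρ ∈ Icc (1/2 : ℝ) (3/2))
    (hτ : 0 < τ) (hτx : τ ≤ x) :
    τ ^ (ρ - 1) ≤ max 1 x * τ ^ (-(1/2) : ℝ) := by
  have hsplit : τ ^ (ρ - 1) = τ ^ (ρ - 1/2) * τ ^ (-(1/2) : ℝ) := by
    rw [← rpow_add hτ]; ring_nf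
  have hmid : τ ^ (ρ - 1/2) ≤ max 1 x := by
    calc τ ^ (ρ - 1/2) ≤ max (τ ^ (0 : ℝ)) (τ ^ (1 : ℝ)) :=
          Real.rpow_le_max_rpow_of_mem_Icc hτ (by linarith [hρ.1]) (by linarith [hρ.2])
      _ ≤ max 1 x := by rw [rpow_zero, rpow_one]; exact max_le_max le_rfl hτx
  rw [hsplit]
  gcongr

lemma exists_rpow_sub_rpow_rpow_le_mul_rpow_min {x : ℝ} (α : ℝ) (hx : 0 < x) :
    ∃ C, ∀ ρ ∈ Icc (1/2 : ℝ) (3/2), ∀ τ ∈ Ico 0 x,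
      (x ^ ρ - τ ^ ρ) ^ (α - 1) ≤ C * (x - τ) ^ min (α - 1) 0 := by
  set c := min (x ^ (-(1/2) : ℝ)) (x ^ (1/2 : ℝ)) / 2
  have hc : 0 < c := by positivity
  have lower : ∀ ρ ∈ Icc (1/2 : ℝ) (3/2), ∀ τ ∈ Ico 0 x, c * (x - τ) ≤ x ^ ρ - τ ^ ρ := by
    intro ρ hρ τ hτ
    have hmin := Real.min_rpow_le_rpow_of_mem_Icc hx
      (by linarith [hρ.1] : -(1/2) ≤ ρ - 1) (by linarith [hρ.2] : ρ - 1 ≤ 1/2)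
    calc c * (x - τ) ≤ 1/2 * x ^ (ρ - 1) * (x - τ) :=
          mul_le_mul_of_nonneg_right (by simp only [c]; linarith) (sub_nonneg.2 hτ.2.le)
      _ ≤ x ^ ρ - τ ^ ρ := Real.mul_rpow_sub_one_mul_sub_le_rpow_sub_rpow
          (by norm_num) (by norm_num) hρ.1 hx hτ.1 hτ.2.le
  have hpos : ∀ τ ∈ Ico 0 x, 0 < c * (x - τ) := fun τ hτ => mul_pos hc (sub_pos.2 hτ.2)
  rcases lt_or_ge α 1 with hα | hα
  · refine ⟨c ^ (α - 1), fun ρ hρ τ hτ => ?_⟩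
    rw [min_eq_left (by linarith)]
    calc (x ^ ρ - τ ^ ρ) ^ (α - 1) ≤ (c * (x - τ)) ^ (α - 1) :=
          rpow_le_rpow_of_nonpos (hpos τ hτ) (lower ρ hρ τ hτ) (by linarith)
      _ = c ^ (α - 1) * (x - τ) ^ (α - 1) := mul_rpow hc.le (sub_pos.2 hτ.2).le
  · refine ⟨(max (x ^ (1/2 : ℝ)) (x ^ (3/2 : ℝ))) ^ (α - 1), fun ρ hρ τ hτ => ?_⟩
    rw [min_eq_right (by linarith), rpow_zero, mul_one]
    refine rpow_le_rpow ((hpos τ hτ).le.trans (lower ρ hρ τ hτ)) ?_ (by linarith)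
    calc x ^ ρ - τ ^ ρ ≤ x ^ ρ := sub_le_self _ (rpow_nonneg hτ.1 _)
      _ ≤ _ := Real.rpow_le_max_rpow_of_mem_Icc hx hρ.1 hρ.2

lemma intervalIntegrable_rpow_mul_sub_rpow {p q b : ℝ} (hp : -1 < p) (hp0 : p ≤ 0)
    (hq : -1 < q) (hq0 : q ≤ 0) (hb : 0 < b) :
    IntervalIntegrable (fun τ => τ ^ p * (b - τ) ^ q) volume 0 b := by
  have hleft : IntervalIntegrable (fun τ : ℝ => τ ^ p) volume 0 b :=
    intervalIntegral.intervalIntegrable_rpow' hp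
  have hright : IntervalIntegrable (fun τ : ℝ => (b - τ) ^ q) volume 0 b := by
    simpa using
      ((intervalIntegral.intervalIntegrable_rpow' hq (a := 0) (b := b)).comp_sub_left b).symm
  -- On `(0, b/2]` the factor `(b - τ) ^ q` is bounded, on `[b/2, b)` the factor `τ ^ p` is.
  refine ((hleft.const_mul ((b / 2) ^ q)).add (hright.const_mul ((b / 2) ^ p))).mono_fun'
    (by fun_prop) ?_
  rw [uIoc_of_le hb.le, EventuallyLE, ae_restrict_iff' measurableSet_Ioc]
  refine .of_forall fun τ hτ => ?_
  have hbτ : 0 ≤ b - τ := sub_nonneg.2 hτ.2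
  rw [norm_of_nonneg (mul_nonneg (rpow_nonneg hτ.1.le _) (rpow_nonneg hbτ _))]
  rcases le_total τ (b / 2) with h | h
  · calc τ ^ p * (b - τ) ^ q ≤ (b / 2) ^ q * τ ^ p := by
          rw [mul_comm]
          exact mul_le_mul_of_nonneg_right
            (rpow_le_rpow_of_nonpos (by positivity) (by linarith) hq0) (rpow_nonneg hτ.1.le _)
      _ ≤ _ := le_add_of_nonneg_right (by positivity)
  · calc τ ^ p * (b - τ) ^ q ≤ (b / 2) ^ p * (b - τ) ^ q :=
          mul_le_mul_of_nonneg_right (rpow_le_rpow_of_nonpos (by positivity) h hp0)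
            (rpow_nonneg hbτ _)
      _ ≤ _ := le_add_of_nonneg_left (mul_nonneg (by positivity) (rpow_nonneg hτ.1.le _))

lemma exists_norm_rpow_sub_one_mul_rpow_sub_rpow_le (α : ℝ) {x : ℝ} (hx : 0 < x) :
    ∃ C, ∀ ρ ∈ Icc (1/2 : ℝ) (3/2), ∀ τ ∈ Ioo 0 x,
      ‖τ ^ (ρ - 1) * (x ^ ρ - τ ^ ρ) ^ (α - 1)‖ ≤
        C * (τ ^ (-(1/2) : ℝ) * (x - τ) ^ min (α - 1) 0) := by
  obtain ⟨C, hC⟩ := exists_rpow_sub_rpow_rpow_le_mul_rpow_min α hx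
  refine ⟨max 1 x * C, fun ρ hρ τ hτ => ?_⟩
  have hsub : 0 ≤ x ^ ρ - τ ^ ρ :=
    sub_nonneg.2 (rpow_le_rpow hτ.1.le hτ.2.le (by linarith [hρ.1]))
  rw [norm_mul, norm_of_nonneg (rpow_nonneg hτ.1.le _), norm_of_nonneg (rpow_nonneg hsub _)]
  calc τ ^ (ρ - 1) * (x ^ ρ - τ ^ ρ) ^ (α - 1)
      ≤ (max 1 x * τ ^ (-(1/2) : ℝ)) * (C * (x - τ) ^ min (α - 1) 0) :=
        mul_le_mul (rpow_sub_one_le_max_one_mul_rpow_neg_half hρ hτ.1 hτ.2.le)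
          (hC ρ hρ τ ⟨hτ.1.le, hτ.2⟩) (rpow_nonneg hsub _)
          (mul_nonneg (zero_le_one.trans (le_max_left _ _)) (rpow_nonneg hτ.1.le _))
    _ = _ := by ring

lemma tendsto_rpow_sub_one_mul_rpow_sub_rpow_nhds_one {α x τ : ℝ} (hτ : 0 < τ) (hτx : τ < x) :
    Tendsto (fun ρ : ℝ => τ ^ (ρ - 1) * (x ^ ρ - τ ^ ρ) ^ (α - 1)) (nhds 1)
      (nhds ((x - τ) ^ (α - 1))) := by
  have hweight : ContinuousAt (fun ρ : ℝ => τ ^ (ρ - 1)) 1 :=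
    continuousAt_const.rpow (continuousAt_id.sub continuousAt_const) (Or.inl hτ.ne')
  have hdifference : ContinuousAt (fun ρ : ℝ => (x ^ ρ - τ ^ ρ) ^ (α - 1)) 1 :=
    ((continuousAt_const.rpow continuousAt_id (Or.inl (hτ.trans hτx).ne')).sub
      (continuousAt_const.rpow continuousAt_id (Or.inl hτ.ne'))).rpow_const
      (Or.inl (by simpa using (sub_pos.2 hτx).ne'))
  simpa using hweight.tendsto.mul hdifference.tendsto

theorem tendsto_intervalIntegral_rpow_kernel {α a x M : ℝ} {f : ℝ → ℝ} (hα : 0 < α)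
    (ha : 0 ≤ a) (hax : a < x) (hfm : AEStronglyMeasurable f (volume.restrict (Ioc a x)))
    (hfM : ∀ τ ∈ Ioc a x, ‖f τ‖ ≤ M) :
    Tendsto (fun ρ : ℝ => ∫ τ in a..x, τ ^ (ρ - 1) * (x ^ ρ - τ ^ ρ) ^ (α - 1) * f τ) (nhds 1)
      (nhds (∫ τ in a..x, (x - τ) ^ (α - 1) * f τ)) := by
  have hx : 0 < x := ha.trans_lt hax
  obtain ⟨C, hC⟩ := exists_norm_rpow_sub_one_mul_rpow_sub_rpow_le α hx
  have hinterior : ∀ᵐ τ, τ ∈ uIoc a x → τ ∈ Ioo a x := by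
    filter_upwards [Measure.ae_ne volume x] with τ hτx hτ
    rw [uIoc_of_le hax.le] at hτ
    exact ⟨hτ.1, lt_of_le_of_ne hτ.2 hτx⟩
  refine intervalIntegral.tendsto_integral_filter_of_dominated_convergence
    (fun τ => C * (τ ^ (-(1/2) : ℝ) * (x - τ) ^ min (α - 1) 0) * M) ?_ ?_ ?_ ?_
  · refine .of_forall fun ρ => ?_
    rw [uIoc_of_le hax.le]
    exact (Measurable.aestronglyMeasurable (by fun_prop)).mul hfm
  · filter_upwards [Icc_mem_nhds (by norm_num : (1/2 : ℝ) < 1) (by norm_num : (1 : ℝ) < 3/2)]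
      with ρ hρ
    filter_upwards [hinterior] with τ hτ hmem
    obtain ⟨haτ, hτx⟩ := hτ hmem
    have hkernel := hC ρ hρ τ ⟨ha.trans_lt haτ, hτx⟩
    rw [norm_mul]
    exact mul_le_mul hkernel (hfM τ ⟨haτ, hτx.le⟩) (norm_nonneg _)
      ((norm_nonneg _).trans hkernel)
  · refine IntervalIntegrable.mul_const (IntervalIntegrable.const_mul ?_ _) _
    refine (intervalIntegrable_rpow_mul_sub_rpow (by norm_num) (by norm_num)
      (lt_min (by linarith) (by norm_num)) (min_le_right _ _) hx).mono_set ?_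
    rw [uIcc_of_le hax.le, uIcc_of_le hx.le]
    exact Icc_subset_Icc_left ha
  · filter_upwards [hinterior] with τ hτ hmem
    obtain ⟨haτ, hτx⟩ := hτ hmem
    exact (tendsto_rpow_sub_one_mul_rpow_sub_rpow_nhds_one (ha.trans_lt haτ) hτx).mul_const (f τ)

/-- For α > 0, 0 ≤ a < x and f continuous on [a, x], the limit as ρ → 1 of the
generalized fractional integral (ρI^α_{a+} f)(x) equals the Riemann–Liouville fractional
integral (I^α_{a+} f)(x). -/
theorem generalized_fractional_integral_tendsto_riemannLiouville
    (α a x : ℝ) (hα : 0 < α) (ha : 0 ≤ a) (hax : a < x)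
    (f : ℝ → ℝ) (hf : ContinuousOn f (Set.Icc a x)) :
    Tendsto
      (fun ρ : ℝ => (ρ ^ (1 - α) / Real.Gamma α) *
        ∫ τ in a..x, τ ^ (ρ - 1) * (x ^ ρ - τ ^ ρ) ^ (α - 1) * f τ)
      (nhds 1)
      (nhds ((1 / Real.Gamma α) * ∫ τ in a..x, (x - τ) ^ (α - 1) * f τ)) := by
  obtain ⟨M, hM⟩ := isCompact_Icc.exists_bound_of_continuousOn hf
  have hprefactor : Tendsto (fun ρ : ℝ => ρ ^ (1 - α) / Gamma α) (nhds 1) (nhds (1 / Gamma α)) := by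
    simpa using ((continuousAt_id.rpow_const (Or.inl one_ne_zero)).div_const (Gamma α)).tendsto
  exact hprefactor.mul <| tendsto_intervalIntegral_rpow_kernel hα ha hax
    ((hf.mono Ioc_subset_Icc_self).aestronglyMeasurable measurableSet_Ioc)
    (fun τ hτ => hM τ (Ioc_subset_Icc_self hτ))
end

section
/- Let α > 0, 0 < a < x be real numbers and let f : ℝ → ℝ be continuous on [a, x]. Then the limit as ρ → 0⁺ (the limit from the right at 0) of the generalized fractional integral (ρI^α_{a+} f)(x) equals the Hadamard fractional integral (1/Γ(α)) · ∫_a^x (log(x/τ))^(α−1) f(τ) (dτ/τ). -/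
/-!
Since `ρ^(1-α) (x^ρ - τ^ρ)^(α-1) = ((x^ρ - τ^ρ)/ρ)^(α-1)` and `(x^ρ - τ^ρ)/ρ → log x - log τ`
(the derivative of `ρ ↦ x^ρ - τ^ρ` at `0`), the integrand converges pointwise to the Hadamard
integrand. For `0 < ρ ≤ 1` the quotient `(x^ρ - τ^ρ)/ρ = ∫_τ^x s^(ρ-1) ds` is comparable to `x - τ`
uniformly in `ρ`, so the integrands are dominated by a multiple of `(x - τ)^(α-1)`, which is
integrable because `α > 0`; dominated convergence concludes.
-/

open MeasureTheory Real Filter Set Topology intervalIntegral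

lemma min_inv_one_le_rpow {s p : ℝ} (hs : 0 < s) (hp : p ∈ Icc (-1) 0) : min s⁻¹ 1 ≤ s ^ p := by
  rcases le_total 1 s with h | h
  · calc min s⁻¹ 1 ≤ s ^ (-1 : ℝ) := by rw [rpow_neg_one]; exact min_le_left _ _
      _ ≤ s ^ p := rpow_le_rpow_of_exponent_le h hp.1
  · calc min s⁻¹ 1 ≤ s ^ (0 : ℝ) := by rw [rpow_zero]; exact min_le_right _ _
      _ ≤ s ^ p := rpow_le_rpow_of_exponent_ge hs h hp.2

lemma rpow_le_max_inv_one {s p : ℝ} (hs : 0 < s) (hp : p ∈ Icc (-1) 0) : s ^ p ≤ max s⁻¹ 1 := by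
  rcases le_total 1 s with h | h
  · calc s ^ p ≤ s ^ (0 : ℝ) := rpow_le_rpow_of_exponent_le h hp.2
      _ ≤ max s⁻¹ 1 := by rw [rpow_zero]; exact le_max_right _ _
  · calc s ^ p ≤ s ^ (-1 : ℝ) := rpow_le_rpow_of_exponent_ge hs h hp.1
      _ ≤ max s⁻¹ 1 := by rw [rpow_neg_one]; exact le_max_left _ _

lemma rpow_le_max_mul_rpow {c C t u : ℝ} (hc : 0 < c) (ht : 0 < t) (hlo : c * t ≤ u)
    (hhi : u ≤ C * t) (p : ℝ) : u ^ p ≤ max (c ^ p) (C ^ p) * t ^ p := by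
  have hu : 0 < u := (mul_pos hc ht).trans_le hlo
  rcases le_total 0 p with hp | hp
  · have hC : 0 ≤ C := nonneg_of_mul_nonneg_left (hu.le.trans hhi) ht
    calc u ^ p ≤ (C * t) ^ p := rpow_le_rpow hu.le hhi hp
      _ = C ^ p * t ^ p := mul_rpow hC ht.le
      _ ≤ max (c ^ p) (C ^ p) * t ^ p := by gcongr; exact le_max_right _ _
  · calc u ^ p ≤ (c * t) ^ p := rpow_le_rpow_of_nonpos (mul_pos hc ht) hlo hp
      _ = c ^ p * t ^ p := mul_rpow hc.le ht.le
      _ ≤ max (c ^ p) (C ^ p) * t ^ p := by gcongr; exact le_max_left _ _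

lemma rpow_sub_rpow_div_eq_integral {ρ τ x : ℝ} (hτ : 0 < τ) (hτx : τ ≤ x) (hρ : ρ ≠ 0) :
    (x ^ ρ - τ ^ ρ) / ρ = ∫ s in τ..x, s ^ (ρ - 1) := by
  have h0 : (0 : ℝ) ∉ uIcc τ x := by
    rw [uIcc_of_le hτx]; exact fun h => hτ.not_ge h.1
  rw [integral_rpow (Or.inr ⟨by contrapose! hρ; linarith, h0⟩)]
  simp

lemma rpow_sub_rpow_div_mem_Icc {ρ τ x : ℝ} (hτ : 0 < τ) (hτx : τ ≤ x) (hρ : ρ ≠ 0)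
    (hρ1 : ρ ≤ 1) :
    (x ^ ρ - τ ^ ρ) / ρ ∈ Icc (x ^ (ρ - 1) * (x - τ)) (τ ^ (ρ - 1) * (x - τ)) := by
  have hint : IntervalIntegrable (fun s : ℝ => s ^ (ρ - 1)) volume τ x :=
    (continuousOn_id.rpow_const fun s hs => Or.inl
      (hτ.trans_le (uIcc_of_le hτx ▸ hs).1).ne').intervalIntegrable
  have hanti : ∀ s ∈ Icc τ x, x ^ (ρ - 1) ≤ s ^ (ρ - 1) ∧ s ^ (ρ - 1) ≤ τ ^ (ρ - 1) :=
    fun s hs => ⟨rpow_le_rpow_of_nonpos (hτ.trans_le hs.1) hs.2 (by linarith),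
      rpow_le_rpow_of_nonpos hτ hs.1 (by linarith)⟩
  rw [rpow_sub_rpow_div_eq_integral hτ hτx hρ]
  constructor
  · simpa [mul_comm] using integral_mono_on hτx intervalIntegrable_const hint
      fun s hs => (hanti s hs).1
  · simpa [mul_comm] using integral_mono_on hτx hint intervalIntegrable_const
      fun s hs => (hanti s hs).2

lemma tendsto_rpow_sub_rpow_div {x τ : ℝ} (hx : 0 < x) (hτ : 0 < τ) :
    Tendsto (fun ρ : ℝ => (x ^ ρ - τ ^ ρ) / ρ) (𝓝[≠] 0) (𝓝 (log (x / τ))) := by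
  have hd : HasDerivAt (fun ρ : ℝ => x ^ ρ - τ ^ ρ) (log (x / τ)) 0 := by
    have h := (hasStrictDerivAt_const_rpow hx 0).hasDerivAt.sub
      (hasStrictDerivAt_const_rpow hτ 0).hasDerivAt
    rwa [rpow_zero, rpow_zero, one_mul, one_mul, ← log_div hx.ne' hτ.ne'] at h
  refine (hasDerivAt_iff_tendsto_slope.mp hd).congr fun ρ => ?_
  simp [slope_def_field]

lemma rpow_one_sub_mul_rpow {ρ w : ℝ} (hρ : 0 < ρ) (hw : 0 ≤ w) (α : ℝ) :
    ρ ^ (1 - α) * w ^ (α - 1) = (w / ρ) ^ (α - 1) := by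
  rw [div_rpow hw hρ.le, show 1 - α = -(α - 1) by ring, rpow_neg hρ.le]
  ring

/-- The kernel `ρ^(1-α) τ^(ρ-1) (x^ρ - τ^ρ)^(α-1)` of the generalized fractional integral, with the
factor `ρ^(1-α)` absorbed into the power. -/
noncomputable def katugampolaKernel (α x ρ τ : ℝ) : ℝ :=
  τ ^ (ρ - 1) * ((x ^ ρ - τ ^ ρ) / ρ) ^ (α - 1)

section

variable {a x α ρ τ : ℝ}

lemma one_sub_rpow_mul_eq_katugampolaKernel (hρ : 0 < ρ) (hτ : 0 ≤ τ) (hτx : τ ≤ x) :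
    ρ ^ (1 - α) * (τ ^ (ρ - 1) * (x ^ ρ - τ ^ ρ) ^ (α - 1)) = katugampolaKernel α x ρ τ := by
  rw [katugampolaKernel, ← rpow_one_sub_mul_rpow hρ
    (sub_nonneg.2 (rpow_le_rpow hτ hτx hρ.le))]
  ring

lemma measurable_katugampolaKernel : Measurable (katugampolaKernel α x ρ) := by
  unfold katugampolaKernel; fun_prop

lemma tendsto_katugampolaKernel (hx : 0 < x) (hτ : 0 < τ) (hτx : τ ≠ x) :
    Tendsto (fun ρ => katugampolaKernel α x ρ τ) (𝓝[>] 0) (𝓝 (log (x / τ) ^ (α - 1) / τ)) := by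
  have hlog : log (x / τ) ≠ 0 := by
    simp [log_div hx.ne' hτ.ne', sub_eq_zero, log_injOn_pos.eq_iff hx hτ, hτx.symm]
  have hpow : Tendsto (fun ρ : ℝ => τ ^ (ρ - 1)) (𝓝[>] 0) (𝓝 τ⁻¹) := by
    have h : Tendsto (fun ρ : ℝ => τ ^ (ρ - 1)) (𝓝 0) (𝓝 (τ ^ ((0 : ℝ) - 1))) :=
      (continuous_const.rpow (continuous_id.sub continuous_const) fun _ => Or.inl hτ.ne').tendsto 0
    rw [zero_sub, rpow_neg_one] at h
    exact h.mono_left nhdsWithin_le_nhds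
  have hquot := ((tendsto_rpow_sub_rpow_div hx hτ).mono_left
    (nhdsWithin_mono 0 fun ρ (hρ : 0 < ρ) => hρ.ne')).rpow_const (p := α - 1) (Or.inl hlog)
  rw [div_eq_inv_mul]
  exact hpow.mul hquot

lemma exists_norm_katugampolaKernel_le (ha : 0 < a) :
    ∃ C, ∀ ρ ∈ Ioc (0 : ℝ) 1, ∀ τ ∈ Ico a x,
      ‖katugampolaKernel α x ρ τ‖ ≤ C * (x - τ) ^ (α - 1) := by
  set c := min x⁻¹ 1
  set C := max a⁻¹ 1
  refine ⟨C * max (c ^ (α - 1)) (C ^ (α - 1)), fun ρ hρ τ hτ => ?_⟩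
  have hτ0 : 0 < τ := ha.trans_le hτ.1
  have hx : 0 < x := hτ0.trans hτ.2
  have hexp : ρ - 1 ∈ Icc (-1 : ℝ) 0 := ⟨by linarith [hρ.1], by linarith [hρ.2]⟩
  have hτC : τ ^ (ρ - 1) ≤ C :=
    (rpow_le_rpow_of_nonpos ha hτ.1 hexp.2).trans (rpow_le_max_inv_one ha hexp)
  obtain ⟨hlo, hhi⟩ := rpow_sub_rpow_div_mem_Icc hτ0 hτ.2.le hρ.1.ne' hρ.2
  have hquot : ((x ^ ρ - τ ^ ρ) / ρ) ^ (α - 1) ≤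
      max (c ^ (α - 1)) (C ^ (α - 1)) * (x - τ) ^ (α - 1) :=
    rpow_le_max_mul_rpow (lt_min (inv_pos.2 hx) one_pos) (sub_pos.2 hτ.2)
      ((mul_le_mul_of_nonneg_right (min_inv_one_le_rpow hx hexp) (sub_pos.2 hτ.2).le).trans hlo)
      (hhi.trans (mul_le_mul_of_nonneg_right hτC (sub_pos.2 hτ.2).le)) _
  have hbase : 0 ≤ (x ^ ρ - τ ^ ρ) / ρ :=
    (mul_nonneg (rpow_nonneg hx.le _) (sub_pos.2 hτ.2).le).trans hlo
  rw [katugampolaKernel, norm_of_nonneg (by positivity), mul_assoc]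
  exact mul_le_mul hτC hquot (rpow_nonneg hbase _) (zero_le_one.trans (le_max_right _ _))

variable {f : ℝ → ℝ}

lemma tendsto_integral_katugampolaKernel_mul (ha : 0 < a) (hax : a ≤ x) (hα : 0 < α)
    (hf : ContinuousOn f (Icc a x)) :
    Tendsto (fun ρ => ∫ τ in a..x, katugampolaKernel α x ρ τ * f τ) (𝓝[>] 0)
      (𝓝 (∫ τ in a..x, log (x / τ) ^ (α - 1) * f τ / τ)) := by
  obtain ⟨C, hC⟩ := exists_norm_katugampolaKernel_le (α := α) (x := x) ha
  obtain ⟨M, hM⟩ := isCompact_Icc.exists_bound_of_continuousOn hf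
  have hne : {x}ᶜ ∈ ae volume := compl_mem_ae_iff.mpr (measure_singleton x)
  refine tendsto_integral_filter_of_dominated_convergence (fun τ => C * M * (x - τ) ^ (α - 1))
    (Eventually.of_forall fun ρ => ?_) ?_ ?_ ?_
  · exact measurable_katugampolaKernel.aestronglyMeasurable.mul
      ((hf.aestronglyMeasurable measurableSet_Icc).mono_measure
        (Measure.restrict_mono (uIoc_of_le hax ▸ Ioc_subset_Icc_self) le_rfl))
  · filter_upwards [Ioc_mem_nhdsGT one_pos] with ρ hρ
    filter_upwards [hne] with τ hτx hτ
    rw [uIoc_of_le hax] at hτ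
    have hK := hC ρ hρ τ ⟨hτ.1.le, lt_of_le_of_ne hτ.2 hτx⟩
    rw [norm_mul, mul_right_comm]
    exact mul_le_mul hK (hM τ (Ioc_subset_Icc_self hτ)) (norm_nonneg _)
      ((norm_nonneg _).trans hK)
  · have h := (intervalIntegrable_rpow' (r := α - 1) (by linarith)).comp_sub_left x
      (a := 0) (b := x - a)
    simpa using (h.symm.const_mul (C * M))
  · filter_upwards [hne] with τ hτx hτ
    rw [uIoc_of_le hax] at hτ
    simpa only [div_mul_eq_mul_div] using (tendsto_katugampolaKernel (ha.trans_le hax)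
      (ha.trans hτ.1) hτx).mul_const (f τ)

end

/-- For α > 0, 0 < a < x and f continuous on [a, x], the limit as ρ → 0⁺ of the
generalized fractional integral (ρI^α_{a+} f)(x) equals the Hadamard fractional integral
(1/Γ(α)) · ∫_a^x (log(x/τ))^(α−1) f(τ) dτ/τ. -/
theorem generalized_fractional_integral_tendsto_hadamard
    (α a x : ℝ) (hα : 0 < α) (ha : 0 < a) (hax : a < x)
    (f : ℝ → ℝ) (hf : ContinuousOn f (Set.Icc a x)) :
    Tendsto
      (fun ρ : ℝ => (ρ ^ (1 - α) / Real.Gamma α) *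
        ∫ τ in a..x, τ ^ (ρ - 1) * (x ^ ρ - τ ^ ρ) ^ (α - 1) * f τ)
      (nhdsWithin 0 (Set.Ioi 0))
      (nhds ((1 / Real.Gamma α) * ∫ τ in a..x, (Real.log (x / τ)) ^ (α - 1) * f τ / τ)) := by
  refine ((tendsto_integral_katugampolaKernel_mul ha hax.le hα hf).const_mul
    (1 / Gamma α)).congr' ?_
  filter_upwards [self_mem_nhdsWithin] with ρ (hρ : 0 < ρ)
  rw [div_eq_mul_one_div (ρ ^ (1 - α)), mul_comm (ρ ^ (1 - α)), mul_assoc,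
    ← intervalIntegral.integral_const_mul (ρ ^ (1 - α))]
  congr 1
  refine intervalIntegral.integral_congr fun τ hτ => ?_
  rw [uIcc_of_le hax.le] at hτ
  rw [← one_sub_rpow_mul_eq_katugampolaKernel hρ (ha.trans_le hτ.1).le hτ.2]
  ring
end

section
/- Let 0 < α < 1, ρ > 0, 0 < a < x be real numbers and let f : ℝ → ℝ be continuous on [a, x]. Then (ρI^(1−α)_{a+} (ρI^α_{a+} f))(x) = ∫_a^x s^(ρ−1) f(s) ds; that is, applying the generalized fractional integral of order 1−α to the generalized fractional integral of order α of f yields the weighted antiderivative ∫_a^x s^(ρ−1) f(s) ds. -/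
/-!
Written out, the composed integral is a double integral of
`τ^(ρ-1) (x^ρ - τ^ρ)^(-α) · s^(ρ-1) (τ^ρ - s^ρ)^(α-1) f(s)` over the triangle `a < s ≤ τ ≤ x`.
After exchanging the order of integration, the inner integral in `τ` no longer involves `f`:
the substitution `t = (τ^ρ - s^ρ) / (x^ρ - s^ρ)` turns it into the Beta integral, equal to
`B(α, 1 - α) / ρ = Γ(α) Γ(1 - α) / ρ` independently of `s`, and this cancels the normalising
constants `ρ^α / Γ(1 - α)` and `ρ^(1-α) / Γ(α)`.
-/

open MeasureTheory Real

/-- The generalized (left-sided) fractional integral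
(ρI^α_{a+} f)(x) = (ρ^(1−α)/Γ(α)) · ∫_a^x τ^(ρ−1) (x^ρ − τ^ρ)^(α−1) f(τ) dτ. -/
noncomputable def genFracIntegral (ρ α a : ℝ) (f : ℝ → ℝ) (x : ℝ) : ℝ :=
  (ρ ^ (1 - α) / Real.Gamma α) * ∫ τ in a..x, τ ^ (ρ - 1) * (x ^ ρ - τ ^ ρ) ^ (α - 1) * f τ

open Set

theorem ofReal_rpow_mul_one_sub_rpow {p q t : ℝ} (ht : t ∈ Icc (0 : ℝ) 1) :
    ((t ^ (p - 1) * (1 - t) ^ (q - 1) : ℝ) : ℂ)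
      = (t : ℂ) ^ ((p : ℂ) - 1) * (1 - (t : ℂ)) ^ ((q : ℂ) - 1) := by
  rw [Complex.ofReal_mul, Complex.ofReal_cpow ht.1, Complex.ofReal_cpow (sub_nonneg.2 ht.2)]
  push_cast
  rfl

theorem integrableOn_rpow_mul_one_sub_rpow {p q : ℝ} (hp : 0 < p) (hq : 0 < q) :
    IntegrableOn (fun t : ℝ ↦ t ^ (p - 1) * (1 - t) ^ (q - 1)) (Icc 0 1) := by
  have h := Complex.betaIntegral_convergent (u := p) (v := q) (by simpa) (by simpa)
  rw [intervalIntegrable_iff_integrableOn_Icc_of_le zero_le_one] at h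
  refine IntegrableOn.congr_fun h.re (fun t ht ↦ ?_) measurableSet_Icc
  rw [← ofReal_rpow_mul_one_sub_rpow ht, RCLike.re_to_complex, Complex.ofReal_re]

theorem integral_rpow_mul_one_sub_rpow {p q : ℝ} (hp : 0 < p) (hq : 0 < q) :
    ∫ t in Icc (0 : ℝ) 1, t ^ (p - 1) * (1 - t) ^ (q - 1) = ProbabilityTheory.beta p q := by
  rw [ProbabilityTheory.beta_eq_betaIntegralReal p q hp hq, Complex.betaIntegral,
    intervalIntegral.integral_of_le zero_le_one, ← integral_Icc_eq_integral_Ioc,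
    ← setIntegral_congr_fun measurableSet_Icc fun t ht ↦ ofReal_rpow_mul_one_sub_rpow ht,
    integral_complex_ofReal, Complex.ofReal_re]

theorem div_mul_rpow_div_mul_one_sub_div_rpow {D u w p q : ℝ} (hD : 0 < D) (hu : 0 ≤ u)
    (huD : u ≤ D) :
    w / D * ((u / D) ^ (p - 1) * (1 - u / D) ^ (q - 1))
      = w * (u ^ (p - 1) * (D - u) ^ (q - 1)) / D ^ (p + q - 1) := by
  rw [one_sub_div hD.ne', div_rpow hu hD.le, div_rpow (sub_nonneg.2 huD) hD.le,
    show p + q - 1 = 1 + (p - 1) + (q - 1) by ring, rpow_add hD, rpow_add hD, rpow_one]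
  field_simp

section RpowKernel

variable {ρ : ℝ}

theorem continuous_rpow_sub_div (hρ : 0 < ρ) (s D : ℝ) :
    Continuous fun τ : ℝ ↦ (τ ^ ρ - s ^ ρ) / D :=
  ((continuous_rpow_const hρ.le).sub continuous_const).div_const D

theorem hasDerivAt_rpow_sub_div (s D : ℝ) {τ : ℝ} (hτ : τ ≠ 0) :
    HasDerivAt (fun τ : ℝ ↦ (τ ^ ρ - s ^ ρ) / D) (ρ * τ ^ (ρ - 1) / D) τ :=
  ((hasDerivAt_rpow_const (Or.inl hτ)).sub_const _).div_const D

variable {s x p q : ℝ}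

theorem rpow_kernel_eq (hρ : 0 < ρ) (hs : 0 ≤ s) (hsx : s < x) {τ : ℝ} (hτ : τ ∈ Icc s x) :
    τ ^ (ρ - 1) * ((τ ^ ρ - s ^ ρ) ^ (p - 1) * (x ^ ρ - τ ^ ρ) ^ (q - 1))
      = (x ^ ρ - s ^ ρ) ^ (p + q - 1) / ρ *
        (ρ * τ ^ (ρ - 1) / (x ^ ρ - s ^ ρ) * (((τ ^ ρ - s ^ ρ) / (x ^ ρ - s ^ ρ)) ^ (p - 1) *
          (1 - (τ ^ ρ - s ^ ρ) / (x ^ ρ - s ^ ρ)) ^ (q - 1))) := by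
  have hD : 0 < x ^ ρ - s ^ ρ := sub_pos.2 (rpow_lt_rpow hs hsx hρ)
  have hsτ : s ^ ρ ≤ τ ^ ρ := rpow_le_rpow hs hτ.1 hρ.le
  have hτx : τ ^ ρ ≤ x ^ ρ := rpow_le_rpow (hs.trans hτ.1) hτ.2 hρ.le
  rw [div_mul_rpow_div_mul_one_sub_div_rpow hD (sub_nonneg.2 hsτ) (sub_le_sub_right hτx _),
    sub_sub_sub_cancel_right]
  field_simp

theorem integrableOn_rpow_kernel (hρ : 0 < ρ) (hp : 0 < p) (hq : 0 < q) (hs : 0 ≤ s)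
    (hsx : s < x) :
    IntegrableOn (fun τ ↦ τ ^ (ρ - 1) * ((τ ^ ρ - s ^ ρ) ^ (p - 1) * (x ^ ρ - τ ^ ρ) ^ (q - 1)))
      (Icc s x) := by
  have hD : 0 < x ^ ρ - s ^ ρ := sub_pos.2 (rpow_lt_rpow hs hsx hρ)
  have h := (integrableOn_Icc_deriv_smul_iff_of_deriv_nonneg
    (continuous_rpow_sub_div hρ s (x ^ ρ - s ^ ρ)).continuousOn
    (fun τ hτ ↦ hasDerivAt_rpow_sub_div s _ (hs.trans_lt hτ.1).ne')
    (fun τ hτ ↦ by have := hs.trans_lt hτ.1; positivity) hsx.le).2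
    (by simpa [hD.ne'] using integrableOn_rpow_mul_one_sub_rpow hp hq)
  exact IntegrableOn.congr_fun (h.const_mul ((x ^ ρ - s ^ ρ) ^ (p + q - 1) / ρ))
    (fun τ hτ ↦ (rpow_kernel_eq hρ hs hsx hτ).symm) measurableSet_Icc

theorem integral_rpow_kernel (hρ : 0 < ρ) (hp : 0 < p) (hq : 0 < q) (hs : 0 ≤ s) (hsx : s < x) :
    ∫ τ in Icc s x, τ ^ (ρ - 1) * ((τ ^ ρ - s ^ ρ) ^ (p - 1) * (x ^ ρ - τ ^ ρ) ^ (q - 1))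
      = (x ^ ρ - s ^ ρ) ^ (p + q - 1) * ProbabilityTheory.beta p q / ρ := by
  have hD : 0 < x ^ ρ - s ^ ρ := sub_pos.2 (rpow_lt_rpow hs hsx hρ)
  have h := integral_Icc_deriv_smul_of_deriv_nonneg
    (continuous_rpow_sub_div hρ s (x ^ ρ - s ^ ρ)).continuousOn
    (fun τ hτ ↦ hasDerivAt_rpow_sub_div s _ (hs.trans_lt hτ.1).ne')
    (fun τ hτ ↦ by have := hs.trans_lt hτ.1; positivity) hsx.le
    (g := fun t ↦ t ^ (p - 1) * (1 - t) ^ (q - 1))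
  simp only [sub_self, zero_div, div_self hD.ne', smul_eq_mul,
    integral_rpow_mul_one_sub_rpow hp hq] at h
  rw [setIntegral_congr_fun measurableSet_Icc fun τ hτ ↦ rpow_kernel_eq hρ hs hsx hτ,
    integral_const_mul, h]
  ring

theorem rpow_kernel_nonneg (hρ : 0 < ρ) (hs : 0 ≤ s) {τ : ℝ} (hτ : τ ∈ Icc s x) :
    0 ≤ τ ^ (ρ - 1) * ((τ ^ ρ - s ^ ρ) ^ (p - 1) * (x ^ ρ - τ ^ ρ) ^ (q - 1)) :=
  mul_nonneg (rpow_nonneg (hs.trans hτ.1) _) (mul_nonneg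
    (rpow_nonneg (sub_nonneg.2 (rpow_le_rpow hs hτ.1 hρ.le)) _)
    (rpow_nonneg (sub_nonneg.2 (rpow_le_rpow (hs.trans hτ.1) hτ.2 hρ.le)) _))

theorem integral_rpow_kernel_one_sub {α : ℝ} (hρ : 0 < ρ) (hα0 : 0 < α) (hα1 : α < 1)
    (hs : 0 ≤ s) (hsx : s < x) :
    ∫ τ in Icc s x, τ ^ (ρ - 1) * ((τ ^ ρ - s ^ ρ) ^ (α - 1) * (x ^ ρ - τ ^ ρ) ^ (1 - α - 1))
      = Gamma α * Gamma (1 - α) / ρ := by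
  rw [integral_rpow_kernel hρ hα0 (sub_pos.2 hα1) hs hsx, ProbabilityTheory.beta,
    add_sub_cancel, sub_self, rpow_zero, Gamma_one, one_mul, div_one]

end RpowKernel

theorem Ici_inter_Ioc_of_lt {α : Type*} [Preorder α] {a x s : α} (h : a < s) :
    Ici s ∩ Ioc a x = Icc s x := by
  ext τ
  simp only [mem_inter_iff, mem_Ici, mem_Ioc, mem_Icc]
  exact ⟨fun hτ ↦ ⟨hτ.1, hτ.2.2⟩, fun hτ ↦ ⟨hτ.1, h.trans_le hτ.1, hτ.2⟩⟩

theorem intervalIntegral_intervalIntegral_swap_triangle {E : Type*} [NormedAddCommGroup E]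
    [NormedSpace ℝ E] {a x : ℝ} (hax : a ≤ x) {K : ℝ → ℝ → E} (hK : IntegrableOn (Function.uncurry K) {p | p.2 ≤ p.1}
      ((volume.restrict (Ioc a x)).prod (volume.restrict (Ioc a x)))) :
    ∫ τ in a..x, ∫ s in a..τ, K τ s = ∫ s in a..x, ∫ τ in s..x, K τ s := by
  have hT : MeasurableSet {p : ℝ × ℝ | p.2 ≤ p.1} := measurableSet_le measurable_snd measurable_fst
  have h := integral_integral_swap
    (f := fun τ s ↦ {p : ℝ × ℝ | p.2 ≤ p.1}.indicator (Function.uncurry K) (τ, s))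
    ((integrable_indicator_iff hT).2 hK)
  simp only [intervalIntegral.integral_of_le hax]
  convert h using 1
  · refine setIntegral_congr_fun measurableSet_Ioc fun τ hτ ↦ ?_
    change _ = ∫ s in Ioc a x, (Iic τ).indicator (K τ) s
    rw [intervalIntegral.integral_of_le hτ.1.le, integral_indicator measurableSet_Iic,
      Measure.restrict_restrict measurableSet_Iic, Iic_inter_Ioc_of_le hτ.2]
  · refine setIntegral_congr_fun measurableSet_Ioc fun s hs ↦ ?_
    change _ = ∫ τ in Ioc a x, (Ici s).indicator (fun τ ↦ K τ s) τ
    rw [intervalIntegral.integral_of_le hs.2, integral_indicator measurableSet_Ici,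
      Measure.restrict_restrict measurableSet_Ici, Ici_inter_Ioc_of_lt hs.1,
      integral_Icc_eq_integral_Ioc]

theorem integrableOn_triangle_mul {a x C : ℝ} {k : ℝ → ℝ → ℝ} {c : ℝ → ℝ}
    (hk : Measurable (Function.uncurry k))
    (hk_nonneg : ∀ s ∈ Ioo a x, ∀ τ ∈ Icc s x, 0 ≤ k τ s)
    (hk_int : ∀ s ∈ Ioo a x, IntegrableOn (fun τ ↦ k τ s) (Icc s x))
    (hk_eq : ∀ s ∈ Ioo a x, ∫ τ in Icc s x, k τ s = C) (hc : IntegrableOn c (Ioc a x)) :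
    IntegrableOn (fun p : ℝ × ℝ ↦ k p.1 p.2 * c p.2) {p | p.2 ≤ p.1}
      ((volume.restrict (Ioc a x)).prod (volume.restrict (Ioc a x))) := by
  have hT : MeasurableSet {p : ℝ × ℝ | p.2 ≤ p.1} := measurableSet_le measurable_snd measurable_fst
  have hae : ∀ᵐ s ∂volume.restrict (Ioc a x), s ∈ Ioo a x := by
    rw [← Measure.restrict_congr_set Ioo_ae_eq_Ioc]
    exact ae_restrict_mem measurableSet_Ioo
  have hmeas : AEStronglyMeasurable (fun p : ℝ × ℝ ↦ k p.1 p.2 * c p.2)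
      ((volume.restrict (Ioc a x)).prod (volume.restrict (Ioc a x))) :=
    hk.aestronglyMeasurable.mul hc.aestronglyMeasurable.comp_snd
  rw [← integrable_indicator_iff hT, integrable_prod_iff' (hmeas.indicator hT)]
  constructor
  · filter_upwards [hae] with s hs
    change Integrable ((Ici s).indicator fun τ ↦ k τ s * c s) _
    rw [integrable_indicator_iff measurableSet_Ici, IntegrableOn,
      Measure.restrict_restrict measurableSet_Ici, Ici_inter_Ioc_of_lt hs.1]
    exact (hk_int s hs).mul_const (c s)
  · refine (hc.norm.const_mul C).congr ?_
    filter_upwards [hae] with s hs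
    change _ = ∫ τ in Ioc a x, ‖(Ici s).indicator (fun τ ↦ k τ s * c s) τ‖
    simp_rw [norm_indicator_eq_indicator_norm]
    rw [integral_indicator measurableSet_Ici, Measure.restrict_restrict measurableSet_Ici,
      Ici_inter_Ioc_of_lt hs.1, ← hk_eq s hs, ← integral_mul_const]
    refine setIntegral_congr_fun measurableSet_Icc fun τ hτ ↦ ?_
    rw [norm_mul, Real.norm_of_nonneg (hk_nonneg s hs τ hτ)]

theorem genFracIntegral_genFracIntegral (ρ α β a x : ℝ) (f : ℝ → ℝ) :
    genFracIntegral ρ β a (genFracIntegral ρ α a f) x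
      = ρ ^ (1 - β) / Gamma β * (ρ ^ (1 - α) / Gamma α) * ∫ τ in a..x, ∫ s in a..τ,
          τ ^ (ρ - 1) * ((τ ^ ρ - s ^ ρ) ^ (α - 1) * (x ^ ρ - τ ^ ρ) ^ (β - 1)) *
            (s ^ (ρ - 1) * f s) := by
  simp only [genFracIntegral, mul_assoc, ← intervalIntegral.integral_const_mul]
  congr 2 with τ
  congr 1 with s
  ring

/-- For 0 < α < 1, ρ > 0, 0 < a < x and f continuous on [a, x],
(ρI^(1−α)_{a+} (ρI^α_{a+} f))(x) = ∫_a^x s^(ρ−1) f(s) ds. -/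
theorem genFracIntegral_comp_eq_weighted_antideriv
    (α ρ a x : ℝ) (hα0 : 0 < α) (hα1 : α < 1) (hρ : 0 < ρ) (ha : 0 < a) (hax : a < x)
    (f : ℝ → ℝ) (hf : ContinuousOn f (Set.Icc a x)) :
    genFracIntegral ρ (1 - α) a (genFracIntegral ρ α a f) x
      = ∫ s in a..x, s ^ (ρ - 1) * f s := by
  set k : ℝ → ℝ → ℝ := fun τ s ↦
    τ ^ (ρ - 1) * ((τ ^ ρ - s ^ ρ) ^ (α - 1) * (x ^ ρ - τ ^ ρ) ^ (1 - α - 1))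
  set c : ℝ → ℝ := fun s ↦ s ^ (ρ - 1) * f s
  have hc : IntegrableOn c (Ioc a x) :=
    ((ContinuousOn.rpow_const continuousOn_id fun s hs ↦ Or.inl (ha.trans_le hs.1).ne').mul
      hf).integrableOn_Icc.mono_set Ioc_subset_Icc_self
  have hK : IntegrableOn (Function.uncurry fun τ s ↦ k τ s * c s) {p | p.2 ≤ p.1}
      ((volume.restrict (Ioc a x)).prod (volume.restrict (Ioc a x))) :=
    integrableOn_triangle_mul (by fun_prop)
      (fun s hs τ hτ ↦ rpow_kernel_nonneg hρ (ha.trans hs.1).le hτ)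
      (fun s hs ↦ integrableOn_rpow_kernel hρ hα0 (sub_pos.2 hα1) (ha.trans hs.1).le hs.2)
      (fun s hs ↦ integral_rpow_kernel_one_sub hρ hα0 hα1 (ha.trans hs.1).le hs.2) hc
  have hinner : ∫ s in a..x, ∫ τ in s..x, k τ s * c s
      = ∫ s in a..x, Gamma α * Gamma (1 - α) / ρ * c s := by
    simp only [intervalIntegral.integral_of_le hax.le, integral_Ioc_eq_integral_Ioo]
    refine setIntegral_congr_fun measurableSet_Ioo fun s hs ↦ ?_
    rw [intervalIntegral.integral_of_le hs.2.le, ← integral_Icc_eq_integral_Ioc,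
      integral_mul_const, integral_rpow_kernel_one_sub hρ hα0 hα1 (ha.trans hs.1).le hs.2]
  have hconst : ρ ^ α / Gamma (1 - α) * (ρ ^ (1 - α) / Gamma α) *
      (Gamma α * Gamma (1 - α) / ρ) = 1 := by
    have := (Gamma_pos_of_pos hα0).ne'
    have := (Gamma_pos_of_pos (sub_pos.2 hα1)).ne'
    rw [div_mul_div_comm, div_mul_div_comm, ← rpow_add hρ, add_sub_cancel, rpow_one]
    field_simp
  rw [genFracIntegral_genFracIntegral, sub_sub_cancel,
    intervalIntegral_intervalIntegral_swap_triangle hax.le hK, hinner,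
    intervalIntegral.integral_const_mul, ← mul_assoc, hconst, one_mul]
end

section
/- (Inverse property.) Let 0 < α < 1, ρ > 0, 0 < a < x be real numbers and let f : ℝ → ℝ be continuous. Then the generalized fractional derivative of order α of the generalized fractional integral of order α of f recovers f: (ρD^α_{a+} (ρI^α_{a+} f))(x) = f(x). -/
/-! Substituting `u = τ ^ ρ` turns `ρI^α_{a+}` into `ρ ^ (-α)` times the Riemann–Liouville
integral of order `α` of `u ↦ f (u ^ (1/ρ))` on `[a ^ ρ, x ^ ρ]`. Riemann–Liouville integrals
compose additively in the order (Fubini over the triangle `a ^ ρ < u < τ < x ^ ρ` and the Beta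
integral), so `ρI^(1-α)_{a+} (ρI^α_{a+} f) = ρI^1_{a+} f = ρ⁻¹ ∫_{a^ρ}^{x^ρ} f (u ^ (1/ρ)) du`,
whose derivative is `x ^ (ρ - 1) f x` by the chain rule and the fundamental theorem of calculus. -/

open MeasureTheory Real

/-- The generalized (left-sided) fractional derivative of order 0 < α < 1:
(ρD^α_{a+} f)(x) = x^(1−ρ) · (d/dx)(ρI^(1−α)_{a+} f)(x). -/
noncomputable def genFracDeriv (ρ α a : ℝ) (f : ℝ → ℝ) (x : ℝ) : ℝ :=
  x ^ (1 - ρ) * deriv (genFracIntegral ρ (1 - α) a f) x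

open Set

theorem integral_rpow_mul_sub_rpow {α β c : ℝ} (hα : 0 < α) (hβ : 0 < β) (hc : 0 < c) :
    ∫ x in (0 : ℝ)..c, x ^ (α - 1) * (c - x) ^ (β - 1) =
      Gamma α * Gamma β / Gamma (α + β) * c ^ (α + β - 1) := by
  have hbeta := Complex.betaIntegral_scaled α β hc
  rw [Complex.betaIntegral_eq_Gamma_mul_div _ _ (by simpa) (by simpa)] at hbeta
  have hcast : ∫ x in (0 : ℝ)..c, ((x ^ (α - 1) * (c - x) ^ (β - 1) : ℝ) : ℂ) =
      ∫ x in (0 : ℝ)..c, (x : ℂ) ^ ((α : ℂ) - 1) * ((c : ℂ) - x) ^ ((β : ℂ) - 1) := by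
    refine intervalIntegral.integral_congr_ae (Filter.Eventually.of_forall fun x hx => ?_)
    rw [uIoc_of_le hc.le] at hx
    push_cast [Complex.ofReal_cpow hx.1.le, Complex.ofReal_cpow (sub_nonneg.2 hx.2)]
    rfl
  apply Complex.ofReal_injective
  rw [← intervalIntegral.integral_ofReal, hcast, hbeta, Complex.ofReal_mul, Complex.ofReal_div, Complex.ofReal_mul, ← Complex.Gamma_ofReal,
    ← Complex.Gamma_ofReal, ← Complex.Gamma_ofReal, Complex.ofReal_cpow hc.le]
  push_cast
  ring

theorem integral_sub_rpow_mul_sub_rpow {α β u Y : ℝ} (hα : 0 < α) (hβ : 0 < β) (huY : u < Y) :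
    ∫ τ in u..Y, (Y - τ) ^ (β - 1) * (τ - u) ^ (α - 1) =
      Gamma α * Gamma β / Gamma (α + β) * (Y - u) ^ (α + β - 1) := by
  have hshift := intervalIntegral.integral_comp_sub_right
    (fun x => x ^ (α - 1) * (Y - u - x) ^ (β - 1)) (a := u) (b := Y) u
  simp only [sub_self, sub_sub_sub_cancel_right] at hshift
  rw [← integral_rpow_mul_sub_rpow hα hβ (sub_pos.2 huY), ← hshift]
  simp only [mul_comm]

theorem integrableOn_Ioo_sub_rpow {γ A Y : ℝ} (hγ : -1 < γ) :
    IntegrableOn (fun u => (Y - u) ^ γ) (Ioo A Y) := by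
  have h := (intervalIntegral.intervalIntegrable_rpow' (a := Y - A) (b := 0) hγ).comp_sub_left Y
  simp only [sub_sub_cancel, sub_zero] at h
  exact h.def'.mono_set (Ioo_subset_Ioc_self.trans Ioc_subset_uIoc)

section RiemannLiouville

noncomputable def riemannLiouvilleIntegral (α A : ℝ) (g : ℝ → ℝ) (y : ℝ) : ℝ :=
  (Gamma α)⁻¹ * ∫ u in A..y, (y - u) ^ (α - 1) * g u

variable {α A y : ℝ}

theorem riemannLiouvilleIntegral_congr {g g' : ℝ → ℝ} (h : EqOn g g' (uIoc A y)) :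
    riemannLiouvilleIntegral α A g y = riemannLiouvilleIntegral α A g' y := by
  rw [riemannLiouvilleIntegral, riemannLiouvilleIntegral,
    intervalIntegral.integral_congr_ae (Filter.Eventually.of_forall fun u hu => by rw [h hu])]

theorem riemannLiouvilleIntegral_const_mul (c : ℝ) (g : ℝ → ℝ) :
    riemannLiouvilleIntegral α A (fun u => c * g u) y = c * riemannLiouvilleIntegral α A g y := by
  simp only [riemannLiouvilleIntegral, mul_left_comm _ c, intervalIntegral.integral_const_mul]

theorem riemannLiouvilleIntegral_one (g : ℝ → ℝ) :
    riemannLiouvilleIntegral 1 A g y = ∫ u in A..y, g u := by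
  simp [riemannLiouvilleIntegral]

end RiemannLiouville

section Composition

variable {α β A Y : ℝ}

noncomputable def compositionKernel (α β Y τ u : ℝ) : ℝ :=
  if u < τ then (Y - τ) ^ (β - 1) * (τ - u) ^ (α - 1) else 0

theorem compositionKernel_nonneg {τ u : ℝ} (hτY : τ ≤ Y) : 0 ≤ compositionKernel α β Y τ u := by
  unfold compositionKernel
  split_ifs with h
  · exact mul_nonneg (rpow_nonneg (sub_nonneg.2 hτY) _) (rpow_nonneg (sub_nonneg.2 h.le) _)
  · exact le_rfl

theorem measurable_compositionKernel :
    Measurable (Function.uncurry (compositionKernel α β Y)) := by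
  unfold compositionKernel
  exact Measurable.ite (measurableSet_lt measurable_snd measurable_fst) (by fun_prop)
    measurable_const

theorem setIntegral_compositionKernel_left (hα : 0 < α) (hβ : 0 < β) {u : ℝ} (hu : u ∈ Ioo A Y) :
    ∫ τ in Ioo A Y, compositionKernel α β Y τ u =
      Gamma α * Gamma β / Gamma (α + β) * (Y - u) ^ (α + β - 1) := by
  have hslice : (fun τ => compositionKernel α β Y τ u) =
      (Ioi u).indicator (fun τ => (Y - τ) ^ (β - 1) * (τ - u) ^ (α - 1)) := by
    ext τ; simp [compositionKernel, indicator_apply]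
  rw [hslice, setIntegral_indicator measurableSet_Ioi, Ioo_inter_Ioi, max_eq_right hu.1.le,
    ← integral_Ioc_eq_integral_Ioo, ← intervalIntegral.integral_of_le hu.2.le,
    integral_sub_rpow_mul_sub_rpow hα hβ hu.2]

theorem integrable_compositionKernel (hα : 0 < α) (hβ : 0 < β) :
    Integrable (Function.uncurry (compositionKernel α β Y))
      ((volume.restrict (Ioo A Y)).prod (volume.restrict (Ioo A Y))) := by
  rw [integrable_prod_iff' measurable_compositionKernel.aestronglyMeasurable]
  constructor
  · filter_upwards [ae_restrict_mem measurableSet_Ioo] with u hu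
    -- the slice has a nonzero (Beta) integral, so it is integrable
    refine Integrable.of_integral_ne_zero ?_
    simp only [Function.uncurry_apply_pair]
    rw [setIntegral_compositionKernel_left hα hβ hu]
    exact (mul_pos (div_pos (mul_pos (Gamma_pos_of_pos hα) (Gamma_pos_of_pos hβ))
      (Gamma_pos_of_pos (add_pos hα hβ))) (rpow_pos_of_pos (sub_pos.2 hu.2) _)).ne'
  · refine ((integrableOn_Ioo_sub_rpow (A := A) (Y := Y) (γ := α + β - 1) (by linarith)).const_mul
      (Gamma α * Gamma β / Gamma (α + β))).congr ?_
    filter_upwards [ae_restrict_mem measurableSet_Ioo] with u hu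
    rw [← setIntegral_compositionKernel_left hα hβ hu]
    refine setIntegral_congr_fun measurableSet_Ioo fun τ hτ => ?_
    exact (norm_of_nonneg (compositionKernel_nonneg hτ.2.le)).symm

theorem integrable_compositionKernel_mul (hα : 0 < α) (hβ : 0 < β) {g : ℝ → ℝ}
    (hg : ContinuousOn g (Icc A Y)) :
    Integrable (Function.uncurry fun τ u => compositionKernel α β Y τ u * g u)
      ((volume.restrict (Ioo A Y)).prod (volume.restrict (Ioo A Y))) := by
  obtain ⟨M, hM⟩ := isCompact_Icc.exists_bound_of_continuousOn hg
  have hgm : AEStronglyMeasurable g (volume.restrict (Ioo A Y)) :=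
    (hg.mono Ioo_subset_Icc_self).aestronglyMeasurable measurableSet_Ioo
  refine ((integrable_compositionKernel (A := A) hα hβ).norm.const_mul M).mono'
    (measurable_compositionKernel.aestronglyMeasurable.mul hgm.comp_snd) ?_
  rw [Measure.prod_restrict]
  filter_upwards [ae_restrict_mem (measurableSet_Ioo.prod measurableSet_Ioo)] with p hp
  rw [Function.uncurry_def, Function.uncurry_def, norm_mul, mul_comm]
  exact mul_le_mul_of_nonneg_right (hM _ (Ioo_subset_Icc_self hp.2)) (norm_nonneg _)

theorem riemannLiouvilleIntegral_riemannLiouvilleIntegral (hα : 0 < α) (hβ : 0 < β) (hAY : A ≤ Y)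
    {g : ℝ → ℝ} (hg : ContinuousOn g (Icc A Y)) :
    riemannLiouvilleIntegral β A (riemannLiouvilleIntegral α A g) Y =
      riemannLiouvilleIntegral (α + β) A g Y := by
  set K := compositionKernel α β Y
  have hΓα := (Gamma_pos_of_pos hα).ne'
  have hΓβ := (Gamma_pos_of_pos hβ).ne'
  have hΓαβ := (Gamma_pos_of_pos (add_pos hα hβ)).ne'
  have hinner : ∀ τ ∈ Ioo A Y, ∫ u in Ioo A Y, K τ u * g u =
      Gamma α * ((Y - τ) ^ (β - 1) * riemannLiouvilleIntegral α A g τ) := by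
    intro τ hτ
    have hslice : (fun u => K τ u * g u) =
        (Iio τ).indicator (fun u => (Y - τ) ^ (β - 1) * ((τ - u) ^ (α - 1) * g u)) := by
      ext u; simp [K, compositionKernel, indicator_apply, mul_assoc]
    rw [hslice, setIntegral_indicator measurableSet_Iio, Ioo_inter_Iio, min_eq_right hτ.2.le,
      integral_const_mul, riemannLiouvilleIntegral, intervalIntegral.integral_of_le hτ.1.le,
      integral_Ioc_eq_integral_Ioo]
    field_simp
  have houter : ∀ u ∈ Ioo A Y, ∫ τ in Ioo A Y, K τ u * g u =
      Gamma α * Gamma β / Gamma (α + β) * ((Y - u) ^ (α + β - 1) * g u) := by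
    intro u hu
    rw [integral_mul_const, setIntegral_compositionKernel_left hα hβ hu, mul_assoc]
  have hswap := integral_integral_swap (integrable_compositionKernel_mul hα hβ hg)
  calc riemannLiouvilleIntegral β A (riemannLiouvilleIntegral α A g) Y
      = (Gamma β)⁻¹ * ∫ τ in Ioo A Y, (Y - τ) ^ (β - 1) * riemannLiouvilleIntegral α A g τ := by
        rw [riemannLiouvilleIntegral, intervalIntegral.integral_of_le hAY,
          integral_Ioc_eq_integral_Ioo]
    _ = (Gamma β)⁻¹ * (Gamma α)⁻¹ * ∫ τ in Ioo A Y, ∫ u in Ioo A Y, K τ u * g u := by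
        rw [setIntegral_congr_fun measurableSet_Ioo hinner, integral_const_mul]
        field_simp
    _ = (Gamma β)⁻¹ * (Gamma α)⁻¹ * (Gamma α * Gamma β / Gamma (α + β)) *
          ∫ u in Ioo A Y, (Y - u) ^ (α + β - 1) * g u := by
        rw [hswap, setIntegral_congr_fun measurableSet_Ioo houter, integral_const_mul]
        ring
    _ = riemannLiouvilleIntegral (α + β) A g Y := by
        rw [riemannLiouvilleIntegral, intervalIntegral.integral_of_le hAY,
          integral_Ioc_eq_integral_Ioo]
        field_simp

end Composition

theorem integral_comp_rpow_Ioo_of_pos {ρ b c : ℝ} (hρ : 0 < ρ) (hb : 0 ≤ b) (hbc : b ≤ c)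
    (h : ℝ → ℝ) :
    ∫ τ in Ioo b c, ρ * τ ^ (ρ - 1) * h (τ ^ ρ) = ∫ u in Ioo (b ^ ρ) (c ^ ρ), h u := by
  have hmono : StrictMonoOn (fun τ : ℝ => τ ^ ρ) (Icc b c) :=
    (strictMonoOn_rpow_Ici_of_exponent_pos hρ).mono fun τ hτ => hb.trans hτ.1
  have himage : (fun τ : ℝ => τ ^ ρ) '' Ioo b c = Ioo (b ^ ρ) (c ^ ρ) :=
    (continuous_rpow_const hρ.le).continuousOn.image_Ioo_of_strictMonoOn hbc hmono
  rw [← himage, integral_image_eq_integral_abs_deriv_smul measurableSet_Ioo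
    (fun τ hτ => (hasDerivAt_rpow_const (Or.inl (hb.trans_lt hτ.1).ne')).hasDerivWithinAt)
    (hmono.injOn.mono Ioo_subset_Icc_self)]
  refine setIntegral_congr_fun measurableSet_Ioo fun τ hτ => ?_
  have hτ0 : 0 < τ := hb.trans_lt hτ.1
  rw [abs_of_pos (by positivity), smul_eq_mul]

section GenFrac

variable {ρ α a y : ℝ}

theorem genFracIntegral_eq_rpow_mul_riemannLiouvilleIntegral (hρ : 0 < ρ) (ha : 0 ≤ a)
    (hay : a ≤ y) (f : ℝ → ℝ) :
    genFracIntegral ρ α a f y =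
      ρ ^ (-α) * riemannLiouvilleIntegral α (a ^ ρ) (fun u => f (u ^ ρ⁻¹)) (y ^ ρ) := by
  have hρα : ρ ^ (1 - α) = ρ ^ (-α) * ρ := by
    rw [← rpow_add_one hρ.ne']
    ring_nf
  rw [genFracIntegral, riemannLiouvilleIntegral, intervalIntegral.integral_of_le hay,
    intervalIntegral.integral_of_le (rpow_le_rpow ha hay hρ.le), integral_Ioc_eq_integral_Ioo,
    integral_Ioc_eq_integral_Ioo, ← integral_comp_rpow_Ioo_of_pos hρ ha hay,
    ← integral_const_mul, ← integral_const_mul, ← integral_const_mul]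
  refine setIntegral_congr_fun measurableSet_Ioo fun τ hτ => ?_
  rw [rpow_rpow_inv (ha.trans hτ.1.le) hρ.ne', hρα]
  ring

theorem genFracIntegral_genFracIntegral_s8 {β : ℝ} (hρ : 0 < ρ) (hα : 0 < α) (hβ : 0 < β)
    (ha : 0 ≤ a) (hay : a ≤ y) {f : ℝ → ℝ} (hf : ContinuousOn f (Icc a y)) :
    genFracIntegral ρ β a (genFracIntegral ρ α a f) y = genFracIntegral ρ (α + β) a f y := by
  have haρ : 0 ≤ a ^ ρ := rpow_nonneg ha ρ
  have hg : ContinuousOn (fun u => f (u ^ ρ⁻¹)) (Icc (a ^ ρ) (y ^ ρ)) := by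
    refine hf.comp (continuous_rpow_const (inv_nonneg.2 hρ.le)).continuousOn fun u hu => ?_
    have hu0 : 0 ≤ u := haρ.trans hu.1
    exact ⟨(le_rpow_inv_iff_of_pos ha hu0 hρ).2 hu.1,
      (rpow_inv_le_iff_of_pos hu0 (ha.trans hay) hρ).2 hu.2⟩
  have hinner : EqOn (fun u => genFracIntegral ρ α a f (u ^ ρ⁻¹))
      (fun u => ρ ^ (-α) * riemannLiouvilleIntegral α (a ^ ρ) (fun u => f (u ^ ρ⁻¹)) u)
      (uIoc (a ^ ρ) (y ^ ρ)) := by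
    intro u hu
    rw [uIoc_of_le (rpow_le_rpow ha hay hρ.le)] at hu
    have hu0 : 0 ≤ u := haρ.trans hu.1.le
    dsimp only
    rw [genFracIntegral_eq_rpow_mul_riemannLiouvilleIntegral hρ ha
      ((le_rpow_inv_iff_of_pos ha hu0 hρ).2 hu.1.le), rpow_inv_rpow hu0 hρ.ne']
  rw [genFracIntegral_eq_rpow_mul_riemannLiouvilleIntegral hρ ha hay,
    genFracIntegral_eq_rpow_mul_riemannLiouvilleIntegral hρ ha hay,
    riemannLiouvilleIntegral_congr hinner, riemannLiouvilleIntegral_const_mul,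
    riemannLiouvilleIntegral_riemannLiouvilleIntegral hα hβ (rpow_le_rpow ha hay hρ.le) hg,
    ← mul_assoc, ← rpow_add hρ, neg_add, add_comm (-β)]

theorem hasDerivAt_genFracIntegral_one {x : ℝ} (hρ : 0 < ρ) (ha : 0 ≤ a) (hax : a < x)
    {f : ℝ → ℝ} (hf : Continuous f) :
    HasDerivAt (genFracIntegral ρ 1 a f) (x ^ (ρ - 1) * f x) x := by
  have hx : 0 < x := ha.trans_lt hax
  have hg : Continuous fun u => f (u ^ ρ⁻¹) := hf.comp (continuous_rpow_const (inv_nonneg.2 hρ.le))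
  have hprimitive : genFracIntegral ρ 1 a f =ᶠ[nhds x]
      fun y => ρ⁻¹ * ∫ u in a ^ ρ..y ^ ρ, f (u ^ ρ⁻¹) := by
    filter_upwards [Ioi_mem_nhds hax] with y hy
    rw [genFracIntegral_eq_rpow_mul_riemannLiouvilleIntegral hρ ha hy.le,
      riemannLiouvilleIntegral_one, rpow_neg_one]
  have hd := ((hg.integral_hasStrictDerivAt (a ^ ρ) (x ^ ρ)).hasDerivAt.comp x
    (hasDerivAt_rpow_const (Or.inl hx.ne'))).const_mul ρ⁻¹
  refine (hd.congr_of_eventuallyEq hprimitive).congr_deriv ?_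
  rw [rpow_rpow_inv hx.le hρ.ne']
  field_simp

end GenFrac

/-- Inverse property: For 0 < α < 1, ρ > 0, 0 < a < x and f continuous,
(ρD^α_{a+} (ρI^α_{a+} f))(x) = f(x). -/
theorem genFracDeriv_genFracIntegral
    (α ρ a x : ℝ) (hα0 : 0 < α) (hα1 : α < 1) (hρ : 0 < ρ) (ha : 0 < a) (hax : a < x)
    (f : ℝ → ℝ) (hf : Continuous f) :
    genFracDeriv ρ α a (genFracIntegral ρ α a f) x = f x := by
  have hx : 0 < x := ha.trans hax
  have hcomp : genFracIntegral ρ (1 - α) a (genFracIntegral ρ α a f) =ᶠ[nhds x]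
      genFracIntegral ρ 1 a f := by
    filter_upwards [Ioi_mem_nhds hax] with y hy
    rw [genFracIntegral_genFracIntegral_s8 hρ hα0 (sub_pos.2 hα1) ha.le hy.le hf.continuousOn,
      add_sub_cancel]
  rw [genFracDeriv,
    ((hasDerivAt_genFracIntegral_one hρ ha.le hax hf).congr_of_eventuallyEq hcomp).deriv,
    ← mul_assoc, ← rpow_add hx, sub_add_sub_cancel, sub_self, rpow_zero, one_mul]
end
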